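/- Let λ, ε ∈ ℝ and let s, u, t, v, x, y ∈ ℂ be nonzero with 0<|ux|≤q², 0<|u/x|≤q², 0<|vy|≤q², 0<|v/y|≤q², 0<|s/u|≤q, 0<|t/v|≤q. Then Φ_{s,u,t,v,λ,ε}(x,y) = conj( Φ_{t̄,v̄,s̄,ū,λ,−ε}(ȳ, x̄) ), where bars denote complex conjugation (the parameters (t̄,v̄,s̄,ū,ȳ,x̄) satisfy the same conditions, so the right-hand side is defined). -/

import Mathlib

noncomputable section

open Complex ComplexConjugate

/-- `q^{iλ} := exp(iλ · log q)`. -/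
def qil (q lam : ℝ) : ℂ := Complex.exp (Complex.I * lam * Real.log q)

/-- the real power `q^a` viewed as a complex number. -/
def qr (q a : ℝ) : ℂ := ((q ^ a : ℝ) : ℂ)

/-- the infinite `q`-shifted factorial `(w;p)_∞ = ∏_{j≥0} (1 - w p^j)`. -/
def qPoch (w p : ℂ) : ℂ := ∏' j : ℕ, (1 - w * p ^ j)

/-- the theta function `θ(w;p) = (w;p)_∞ (p/w;p)_∞`. -/
def qTheta (w p : ℂ) : ℂ := qPoch w p * qPoch (p / w) p

/-- `μ_s = (s + s⁻¹)/(q⁻¹ - q)`. -/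
def mu (q : ℝ) (s : ℂ) : ℂ := (s + s⁻¹) / ((q : ℂ)⁻¹ - (q : ℂ))

/-- The eigenfunction
`f_{x,s,u,λ,ε}(z) = (sq^{1−2iλ}x^{±1}, uszq^{1+iλ};q²)_∞ θ(q^{2ε−iλ}uz/s;q²) /
(uzq^{−iλ}x^{±1}, sq^{1−iλ}/(uz);q²)_∞`. -/
def fAW (q lam eps : ℝ) (x s u : ℂ) (z : ℂ) : ℂ :=
  (qPoch (s * (q : ℂ) * ((qil q lam)⁻¹) ^ 2 * x) ((q : ℂ) ^ 2) *
    qPoch (s * (q : ℂ) * ((qil q lam)⁻¹) ^ 2 / x) ((q : ℂ) ^ 2) *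
    qPoch (u * s * z * (q : ℂ) * qil q lam) ((q : ℂ) ^ 2) *
    qTheta (qr q (2 * eps) * (qil q lam)⁻¹ * u * z / s) ((q : ℂ) ^ 2)) /
  (qPoch (u * z * (qil q lam)⁻¹ * x) ((q : ℂ) ^ 2) *
    qPoch (u * z * (qil q lam)⁻¹ / x) ((q : ℂ) ^ 2) *
    qPoch (s * (q : ℂ) * (qil q lam)⁻¹ / (u * z)) ((q : ℂ) ^ 2))

/-- the denominator of `f_{x,s,u,λ,ε}` at the point `z`. -/
def fDen (q lam : ℝ) (x s u : ℂ) (z : ℂ) : ℂ :=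
  qPoch (u * z * (qil q lam)⁻¹ * x) ((q : ℂ) ^ 2) *
    qPoch (u * z * (qil q lam)⁻¹ / x) ((q : ℂ) ^ 2) *
    qPoch (s * (q : ℂ) * (qil q lam)⁻¹ / (u * z)) ((q : ℂ) ^ 2)

/-- the integrand of the overlap coefficient `Φ` (without the prefactor). -/
def PhiIntegrand (q lam eps : ℝ) (s u t v x y : ℂ) (z : ℂ) : ℂ :=
  (qPoch (u * s * z * (q : ℂ) * qil q lam) ((q : ℂ) ^ 2) *
    qPoch (t * v * z * (q : ℂ) * (qil q lam)⁻¹) ((q : ℂ) ^ 2) *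
    qTheta (u * z * qr q (2 * eps) * (qil q lam)⁻¹ / s) ((q : ℂ) ^ 2) *
    qTheta (v * z * qr q (-(2 * eps)) * qil q lam / t) ((q : ℂ) ^ 2)) /
  (qPoch (u * z * (qil q lam)⁻¹ * x) ((q : ℂ) ^ 2) *
    qPoch (u * z * (qil q lam)⁻¹ / x) ((q : ℂ) ^ 2) *
    qPoch (s * (q : ℂ) * (qil q lam)⁻¹ / (u * z)) ((q : ℂ) ^ 2) *
    qPoch (v * z * qil q lam * y) ((q : ℂ) ^ 2) *
    qPoch (v * z * qil q lam / y) ((q : ℂ) ^ 2) *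
    qPoch (t * (q : ℂ) * qil q lam / (v * z)) ((q : ℂ) ^ 2))

/-- the overlap coefficient
`Φ_{s,u,t,v,λ,ε}(x,y) = (sq^{1−2iλ}x^{±1}, tq^{1+2iλ}y^{±1};q²)_∞ · (2πi)⁻¹ ∮_{|z|=1} ⋯ dz/z`. -/
def PhiAW (q lam eps : ℝ) (s u t v x y : ℂ) : ℂ :=
  (qPoch (s * (q : ℂ) * ((qil q lam)⁻¹) ^ 2 * x) ((q : ℂ) ^ 2) *
    qPoch (s * (q : ℂ) * ((qil q lam)⁻¹) ^ 2 / x) ((q : ℂ) ^ 2) *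
    qPoch (t * (q : ℂ) * (qil q lam) ^ 2 * y) ((q : ℂ) ^ 2) *
    qPoch (t * (q : ℂ) * (qil q lam) ^ 2 / y) ((q : ℂ) ^ 2)) *
  ((2 * (Real.pi : ℂ) * Complex.I)⁻¹ *
    ∮ z in C(0, (1 : ℝ)), PhiIntegrand q lam eps s u t v x y z / z)


/-! Complex conjugation commutes with the infinite products and, up to reversing the orientation
of the unit circle, with the contour integral: `conj (∮ f(z) dz) = -∮ conj (f (conj z)) dz`, the
sign cancelling against `conj (2πi)⁻¹ = -(2πi)⁻¹`. Conjugating the integrand of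
`Φ_{t̄,v̄,s̄,ū,λ,−ε}(ȳ,x̄)` at `z̄` inverts `q^{iλ}`, which turns it factor by factor into the
integrand of `Φ_{s,u,t,v,λ,ε}(x,y)` at `z`. -/

theorem Complex.conj_tprod {ι : Type*} (f : ι → ℂ) : conj (∏' i, f i) = ∏' i, conj (f i) :=
  Function.LeftInverse.map_tprod (g := starRingEnd ℂ) f continuous_conj continuous_conj conj_conj

theorem intervalIntegral.integral_conj {f : ℝ → ℂ} {a b : ℝ} :
    conj (∫ x in a..b, f x) = ∫ x in a..b, conj (f x) := by
  simp only [intervalIntegral, map_sub, ← _root_.integral_conj]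

theorem conj_circleIntegral (f : ℂ → ℂ) (c : ℂ) (R : ℝ) :
    conj (∮ z in C(c, R), f z) = -∮ z in C(conj c, R), conj (f (conj z)) := by
  set g : ℝ → ℂ := fun θ ↦
    deriv (circleMap (conj c) R) θ • conj (f (conj (circleMap (conj c) R θ)))
  have hg : Function.Periodic g (2 * Real.pi) := fun θ ↦ by
    simp only [g, deriv_circleMap, periodic_circleMap _ _ θ]
  have hconj : ∀ θ, conj (deriv (circleMap c R) θ • f (circleMap c R θ)) = -g (-θ) := fun θ ↦ by
    simp only [g, deriv_circleMap, smul_eq_mul, map_mul, conj_I,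
      conj_circleMap, map_zero, conj_conj, neg_neg]
    ring
  calc conj (∮ z in C(c, R), f z)
      = -∫ θ in (0 : ℝ)..2 * Real.pi, g (-θ) := by
        simp only [circleIntegral, intervalIntegral.integral_conj, hconj,
          intervalIntegral.integral_neg]
    _ = -∫ θ in -(2 * Real.pi)..0, g θ := by rw [intervalIntegral.integral_comp_neg, neg_zero]
    _ = -∮ z in C(conj c, R), conj (f (conj z)) := by
        rw [circleIntegral, ← zero_add (2 * Real.pi),
          ← hg.intervalIntegral_add_eq (-(2 * Real.pi)) 0]
        ring_nf

theorem conj_qPoch (w p : ℂ) : conj (qPoch w p) = qPoch (conj w) (conj p) := by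
  simp only [qPoch, Complex.conj_tprod, map_sub, map_mul, map_pow, map_one]

theorem conj_qTheta (w p : ℂ) : conj (qTheta w p) = qTheta (conj w) (conj p) := by
  simp only [qTheta, map_mul, map_div₀, conj_qPoch]

theorem conj_qil (q lam : ℝ) : conj (qil q lam) = (qil q lam)⁻¹ := by
  rw [qil, ← exp_conj, ← exp_neg]
  simp only [map_mul, conj_I, conj_ofReal, neg_mul]

theorem conj_qr (q a : ℝ) : conj (qr q a) = qr q a := conj_ofReal _

theorem conj_PhiIntegrand_conj (q lam eps : ℝ) (s u t v x y z : ℂ) :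
    conj (PhiIntegrand q lam (-eps) (conj t) (conj v) (conj s) (conj u) (conj y) (conj x)
      (conj z)) = PhiIntegrand q lam eps s u t v x y z := by
  simp only [PhiIntegrand, map_div₀, map_mul, map_inv₀, map_pow, conj_qPoch, conj_qTheta,
    conj_qil, conj_qr, conj_ofReal, conj_conj, inv_inv, mul_neg, neg_neg]
  ring_nf

theorem stmt9_general (q : ℝ) (lam eps : ℝ) (s u t v x y : ℂ) :
    PhiAW q lam eps s u t v x y
      = conj (PhiAW q lam (-eps) (conj t) (conj v) (conj s) (conj u) (conj y) (conj x)) := by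
  simp only [PhiAW, map_mul, map_inv₀, map_pow, map_div₀, conj_circleIntegral, conj_qPoch,
    conj_qil, conj_PhiIntegrand_conj, conj_conj, conj_ofReal, conj_I, map_ofNat, inv_inv,
    map_zero]
  ring

/-- The symmetry `Φ_α(x,y) = conj(Φ_{ᾱ^ϑ}(ȳ,x̄))` of the overlap coefficient. -/
theorem stmt9 (q : ℝ) (hq0 : 0 < q) (hq1 : q < 1) (lam eps : ℝ) (s u t v x y : ℂ)
    (hs : s ≠ 0) (hu : u ≠ 0) (ht : t ≠ 0) (hv : v ≠ 0) (hx : x ≠ 0) (hy : y ≠ 0)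
    (h1 : ‖u * x‖ ≤ q ^ 2) (h2 : ‖u / x‖ ≤ q ^ 2)
    (h3 : ‖v * y‖ ≤ q ^ 2) (h4 : ‖v / y‖ ≤ q ^ 2)
    (h5 : ‖s / u‖ ≤ q) (h6 : ‖t / v‖ ≤ q) :
    PhiAW q lam eps s u t v x y
      = conj (PhiAW q lam (-eps) (conj t) (conj v) (conj s) (conj u) (conj y) (conj x)) :=
  stmt9_general q lam eps s u t v x y

end
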